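/- For d ≥ 2 and n ≥ 1, the two recursions agree: Σ_{k=0}^{n} C(n,k)^2 · f_{d-1}(k) = d · Σ_{k=0}^{n-1} C(n,k) · C(n-1,k) · f_{d-1}(k), where f is defined by f_d(n) = Σ_{m_1+⋯+m_d=n} (n!/(m_1!⋯m_d!))^2. -/

import Mathlib

/-- `f d n = Σ_{m₁+⋯+m_d = n} (n! / (m₁! ⋯ m_d!))²`, the number of abelian squares of
length `n + n` over a `d`-letter alphabet. -/
def f (d n : ℕ) : ℕ :=
  ∑ m ∈ Finset.Nat.antidiagonalTuple d n, (Nat.multinomial Finset.univ m) ^ 2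

/-!
Splitting off the first letter count `m₁ = n - k` writes `f (e + 1) n` as
`∑ₖ C(n,k)² f e k`, so the left side is `f d n`. The same decomposition weighted by `m₁`,
together with `C(n,k) (n - k) = n C(n-1,k)`, identifies `n` times the sum on the right,
without its factor `d`, with `∑ₘ multinomial(m)² m₁`. By symmetry of the coordinates this
weighted sum does not depend on which coordinate is used, and summing over all `d` coordinates
gives `n f d n`.
-/

open Finset

theorem Finset.Nat.sum_antidiagonalTuple_succ {M : Type*} [AddCommMonoid M] (k n : ℕ)
    (g : (Fin (k + 1) → ℕ) → M) :
    ∑ m ∈ Nat.antidiagonalTuple (k + 1) n, g m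
      = ∑ p ∈ antidiagonal n, ∑ x ∈ Nat.antidiagonalTuple k p.2, g (Fin.cons p.1 x) := by
  change ((List.Nat.antidiagonalTuple (k + 1) n).map g).sum = _
  simp only [List.Nat.antidiagonalTuple, List.flatMap_def, List.map_flatten, List.sum_flatten,
    Function.comp_def, List.map_map]
  rfl

theorem Nat.multinomial_univ_fin_cons {k : ℕ} (a : ℕ) (x : Fin k → ℕ) :
    Nat.multinomial univ (Fin.cons a x : Fin (k + 1) → ℕ)
      = (a + ∑ i, x i).choose a * Nat.multinomial univ x := by
  rw [Fin.univ_succ, Nat.multinomial_cons]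
  simp [Nat.multinomial, Fin.cons_succ]

theorem Nat.multinomial_univ_comp_perm {α : Type*} [Fintype α] (σ : Equiv.Perm α)
    (m : α → ℕ) :
    Nat.multinomial univ (m ∘ σ) = Nat.multinomial univ m := by
  simp only [Nat.multinomial, Function.comp_apply, Equiv.sum_comp σ m,
    Equiv.prod_comp σ fun i => (m i).factorial]

theorem sum_sq_multinomial_mul_apply_zero (e n : ℕ) (w : ℕ → ℕ) :
    ∑ m ∈ Nat.antidiagonalTuple (e + 1) n, Nat.multinomial univ m ^ 2 * w (m 0)
      = ∑ k ∈ range (n + 1), n.choose k ^ 2 * w (n - k) * f e k := by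
  have inner : ∀ p ∈ antidiagonal n,
      ∑ x ∈ Nat.antidiagonalTuple e p.2,
          Nat.multinomial univ (Fin.cons p.1 x : Fin (e + 1) → ℕ) ^ 2 * w p.1
        = n.choose p.2 ^ 2 * w p.1 * f e p.2 := by
    rintro ⟨a, b⟩ hab
    rw [HasAntidiagonal.mem_antidiagonal] at hab
    rw [f, mul_sum]
    refine sum_congr rfl fun x hx => ?_
    rw [Nat.mem_antidiagonalTuple] at hx
    rw [Nat.multinomial_univ_fin_cons, hx, Nat.choose_symm_add, hab]
    ring
  rw [Nat.sum_antidiagonalTuple_succ]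
  simp only [Fin.cons_zero]
  rw [sum_congr rfl inner, ← Nat.sum_antidiagonal_swap]
  exact Nat.sum_antidiagonal_eq_sum_range_succ (fun k a => n.choose k ^ 2 * w a * f e k) n

theorem f_succ (e n : ℕ) : f (e + 1) n = ∑ k ∈ range (n + 1), n.choose k ^ 2 * f e k := by
  simpa [f] using sum_sq_multinomial_mul_apply_zero e n fun _ => 1

theorem sum_sq_multinomial_mul_apply_eq {d : ℕ} (n : ℕ) (i j : Fin d) :
    ∑ m ∈ Nat.antidiagonalTuple d n, Nat.multinomial univ m ^ 2 * m i
      = ∑ m ∈ Nat.antidiagonalTuple d n, Nat.multinomial univ m ^ 2 * m j := by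
  have swap_mem :
      ∀ m ∈ Nat.antidiagonalTuple d n, m ∘ Equiv.swap i j ∈ Nat.antidiagonalTuple d n := by
    intro m hm
    rw [Nat.mem_antidiagonalTuple] at hm ⊢
    rw [← hm]
    exact Equiv.sum_comp _ m
  refine sum_nbij' (· ∘ Equiv.swap i j) (· ∘ Equiv.swap i j) swap_mem swap_mem
    (fun m _ => by ext; simp) (fun m _ => by ext; simp) fun m _ => ?_
  simp [Nat.multinomial_univ_comp_perm]

theorem mul_f_eq_mul_sum_apply {d : ℕ} (n : ℕ) (i : Fin d) :
    n * f d n = d * ∑ m ∈ Nat.antidiagonalTuple d n, Nat.multinomial univ m ^ 2 * m i := by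
  calc n * f d n
      = ∑ m ∈ Nat.antidiagonalTuple d n, ∑ j, Nat.multinomial univ m ^ 2 * m j := by
        rw [f, mul_sum]
        refine sum_congr rfl fun m hm => ?_
        rw [← mul_sum, Nat.mem_antidiagonalTuple.mp hm, mul_comm]
    _ = ∑ j : Fin d, ∑ m ∈ Nat.antidiagonalTuple d n, Nat.multinomial univ m ^ 2 * m i := by
        rw [sum_comm]
        exact sum_congr rfl fun j _ => sum_sq_multinomial_mul_apply_eq n j i
    _ = _ := by simp

theorem sum_choose_sq_mul_sub (n : ℕ) (g : ℕ → ℕ) :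
    ∑ k ∈ range (n + 1), n.choose k ^ 2 * (n - k) * g k
      = n * ∑ k ∈ range n, n.choose k * (n - 1).choose k * g k := by
  rw [sum_range_succ, Nat.sub_self, mul_zero, zero_mul, add_zero, mul_sum]
  refine sum_congr rfl fun k hk => ?_
  obtain ⟨m, rfl⟩ : ∃ m, n = m + 1 :=
    Nat.exists_eq_add_one_of_ne_zero (Nat.ne_zero_of_lt (mem_range.mp hk))
  rw [Nat.add_sub_cancel, sq, mul_assoc (_ : ℕ) _ (_ - k), ← Nat.choose_mul_succ_eq]
  ring

theorem recursions_agree (d n : ℕ) (hd : 2 ≤ d) (hn : 1 ≤ n) :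
    ∑ k ∈ Finset.range (n + 1), (n.choose k) ^ 2 * f (d - 1) k
      = d * ∑ k ∈ Finset.range n, n.choose k * (n - 1).choose k * f (d - 1) k := by
  obtain ⟨e, rfl⟩ : ∃ e, d = e + 1 := ⟨d - 1, by omega⟩
  rw [Nat.add_sub_cancel]
  refine Nat.eq_of_mul_eq_mul_left hn ?_
  calc n * ∑ k ∈ range (n + 1), n.choose k ^ 2 * f e k
      = n * f (e + 1) n := by rw [f_succ]
    _ = (e + 1) * ∑ m ∈ Nat.antidiagonalTuple (e + 1) n, Nat.multinomial univ m ^ 2 * m 0 :=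
        mul_f_eq_mul_sum_apply n 0
    _ = (e + 1) * ∑ k ∈ range (n + 1), n.choose k ^ 2 * (n - k) * f e k :=
        congrArg _ (sum_sq_multinomial_mul_apply_zero e n id)
    _ = n * ((e + 1) * ∑ k ∈ range n, n.choose k * (n - 1).choose k * f e k) := by
        rw [sum_choose_sq_mul_sub]; ring
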